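/- Let g be a finite-dimensional Lie algebra with basis {x_a}, structure constants f_{ab}^c, invariant form κ. In R = ℂ[z₁,z₂][(z₁−z₂)^{-1}], let P° be the ℂ[z₁,z₂]-span of: 1°⊠1°; 1°⊠x_a; x_a⊠1°; and x_a⊠x_b − (1/2)Σ_c f_{ab}^c (z₁−z₂)^{-1}(1°⊠x_c + x_c⊠1°) − κ_{ab}(z₁−z₂)^{-2} 1°⊠1°. Then the annihilator P°^⊥ (pairings required regular, i.e. in ℂ[z₁,z₂]) is the ℂ[z₁,z₂]-span of: 1°^∨⊠1°^∨ + Σ_{a,b} κ_{ab}(z₁−z₂)^{-2} x_a^∨⊠x_b^∨; 1°^∨⊠x_c^∨ + (1/2)Σ_{a,b} f_{ab}^c (z₁−z₂)^{-1} x_a^∨⊠x_b^∨; x_c^∨⊠1°^∨ + (1/2)Σ_{a,b} f_{ab}^c (z₁−z₂)^{-1} x_a^∨⊠x_b^∨; and x_a^∨⊠x_b^∨. -/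
import Mathlib


open MvPolynomial

noncomputable section ChiralLocalModel

/-- The coordinate ring `ℂ[z₁, z₂]` of the local model `X² = 𝔸²`. -/
abbrev A2 : Type := MvPolynomial (Fin 2) ℂ

/-- The equation `z₁ - z₂` of the diagonal. -/
def dlt : A2 := X 0 - X 1

/-- The ring `ℂ[z₁, z₂][(z₁-z₂)⁻¹]` of functions on the complement `U` of the diagonal. -/
abbrev R2 : Type := Localization.Away dlt

/-- The inverse `(z₁ - z₂)⁻¹`. -/
def dltInv : R2 := IsLocalization.Away.invSelf dlt

variable {ι : Type} [Fintype ι] [DecidableEq ι]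

/-- The pairing with a fixed element `p` of the free module `ι → R2`, as an
`A2`-linear map `t ↦ Σ_q t q * p q`. -/
def pairMap (p : ι → R2) : (ι → R2) →ₗ[A2] R2 where
  toFun t := ∑ q, t q * p q
  map_add' t t' := by simp [add_mul, Finset.sum_add_distrib]
  map_smul' a t := by
    simp only [smul_mul_assoc, RingHom.id_apply, Pi.smul_apply]
    exact (Finset.smul_sum (r := a) (f := fun q => t q * p q) (s := Finset.univ)).symm

/-- The "chiral annihilator" of an `ℂ[z₁,z₂]`-submodule `P` of the free
`R2`-module `ι → R2`: all `t` whose pairing with every element of `P` is regular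
along the diagonal, i.e. lies in the image of `ℂ[z₁,z₂]`. -/
def chiralAnn (P : Submodule A2 (ι → R2)) : Submodule A2 (ι → R2) :=
  ⨅ p ∈ P, Submodule.comap (pairMap p) (LinearMap.range (Algebra.linearMap A2 R2))

end ChiralLocalModel

noncomputable section

variable (n : ℕ)

/-- The standard basis `u ⊠ v`, `u, v ∈ {1°, x_1, …, x_n}` (with `none = 1°`),
of the free module of rank `(n+1)²`. -/
def eb (p : Option (Fin n) × Option (Fin n)) : (Option (Fin n) × Option (Fin n)) → R2 :=
  Pi.single p 1

/-- A complex constant, viewed inside `ℂ[z₁,z₂][(z₁−z₂)⁻¹]`. -/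
def cst (w : ℂ) : R2 := algebraMap A2 R2 (MvPolynomial.C w)

/-- Generators of `P°` for the affine Kac–Moody datum: `1°⊠1°`, `1°⊠x_a`, `x_a⊠1°` and
`x_a⊠x_b − (1/2)Σ_c f_{ab}^c (z₁−z₂)⁻¹ (1°⊠x_c + x_c⊠1°) − κ_{ab}(z₁−z₂)⁻² 1°⊠1°`,
where `f a b c = f_{ab}^c`. -/
def kmPgen (f : Fin n → Fin n → Fin n → ℂ) (κ : Fin n → Fin n → ℂ) :
    Set ((Option (Fin n) × Option (Fin n)) → R2) :=
  {m | m = eb n (none, none) ∨ (∃ a, m = eb n (none, some a)) ∨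
    (∃ a, m = eb n (some a, none)) ∨
    (∃ a b, m = eb n (some a, some b) -
      (∑ c, ((cst ((2 : ℂ)⁻¹ * f a b c) * dltInv) •
        (eb n (none, some c) + eb n (some c, none)))) -
      (cst (κ a b) * dltInv * dltInv) • eb n (none, none))}

/-- Claimed generators of the annihilator `P°^⊥` for the affine Kac–Moody datum:
`1°^∨⊠1°^∨ + Σ_{a,b} κ_{ab}(z₁−z₂)⁻² x_a^∨⊠x_b^∨`,
`1°^∨⊠x_c^∨ + (1/2)Σ_{a,b} f_{ab}^c (z₁−z₂)⁻¹ x_a^∨⊠x_b^∨`,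
`x_c^∨⊠1°^∨ + (1/2)Σ_{a,b} f_{ab}^c (z₁−z₂)⁻¹ x_a^∨⊠x_b^∨` and `x_a^∨⊠x_b^∨`. -/
def kmQgen (f : Fin n → Fin n → Fin n → ℂ) (κ : Fin n → Fin n → ℂ) :
    Set ((Option (Fin n) × Option (Fin n)) → R2) :=
  {m | m = eb n (none, none) +
        ∑ a, ∑ b, (cst (κ a b) * dltInv * dltInv) • eb n (some a, some b) ∨
    (∃ c, m = eb n (none, some c) +
      ∑ a, ∑ b, (cst ((2 : ℂ)⁻¹ * f a b c) * dltInv) • eb n (some a, some b)) ∨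
    (∃ c, m = eb n (some c, none) +
      ∑ a, ∑ b, (cst ((2 : ℂ)⁻¹ * f a b c) * dltInv) • eb n (some a, some b)) ∨
    (∃ a b, m = eb n (some a, some b))}

end

section AnnAux

open MvPolynomial

variable {ι : Type} [Fintype ι] [DecidableEq ι]

lemma pairMap_apply' (p t : ι → R2) : pairMap p t = ∑ q, t q * p q := rfl

lemma pairMap_comm (p t : ι → R2) : pairMap p t = pairMap t p := by
  simp [pairMap_apply', mul_comm]

lemma pairMap_single (t : ι → R2) (q0 : ι) : pairMap t (Pi.single q0 1) = t q0 := by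
  rw [pairMap_comm, pairMap_apply']
  simp [Pi.single_apply]

lemma pairMap_smulR (t : ι → R2) (r : R2) (x : ι → R2) :
    pairMap t (r • x) = r * pairMap t x := by
  rw [pairMap_comm, pairMap_apply', pairMap_comm, pairMap_apply', Finset.mul_sum]
  simp [mul_assoc, mul_left_comm]

noncomputable section

variable (n : ℕ)

lemma pairMap_eb (t : (Option (Fin n) × Option (Fin n)) → R2) (q0) :
    pairMap t (eb n q0) = t q0 := pairMap_single t q0

lemma eb_apply (p q : Option (Fin n) × Option (Fin n)) :
    eb n p q = if q = p then 1 else 0 := Pi.single_apply p 1 q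

variable (f : Fin n → Fin n → Fin n → ℂ) (κ : Fin n → Fin n → ℂ)

/-- generators of P -/
def P4 (a b : Fin n) : (Option (Fin n) × Option (Fin n)) → R2 :=
  eb n (some a, some b) -
      (∑ c, ((cst ((2 : ℂ)⁻¹ * f a b c) * dltInv) •
        (eb n (none, some c) + eb n (some c, none)))) -
      (cst (κ a b) * dltInv * dltInv) • eb n (none, none)

/-- generators of Q -/
def Q1 : (Option (Fin n) × Option (Fin n)) → R2 :=
  eb n (none, none) +
        ∑ a, ∑ b, (cst (κ a b) * dltInv * dltInv) • eb n (some a, some b)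

def Q2 (c : Fin n) : (Option (Fin n) × Option (Fin n)) → R2 :=
  eb n (none, some c) +
      ∑ a, ∑ b, (cst ((2 : ℂ)⁻¹ * f a b c) * dltInv) • eb n (some a, some b)

def Q3 (c : Fin n) : (Option (Fin n) × Option (Fin n)) → R2 :=
  eb n (some c, none) +
      ∑ a, ∑ b, (cst ((2 : ℂ)⁻¹ * f a b c) * dltInv) • eb n (some a, some b)

lemma pairMap_P4 (t : (Option (Fin n) × Option (Fin n)) → R2) (a b : Fin n) :
    pairMap t (P4 n f κ a b) = t (some a, some b) -
      (∑ c, (cst ((2 : ℂ)⁻¹ * f a b c) * dltInv) * (t (none, some c) + t (some c, none))) -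
      (cst (κ a b) * dltInv * dltInv) * t (none, none) := by
  rw [P4, map_sub, map_sub, map_sum]
  simp only [pairMap_smulR, map_add, pairMap_eb]

-- value lemmas
lemma Q1_00 : Q1 n κ (none, none) = 1 := by
  simp [Q1, eb_apply, Finset.sum_apply, Pi.smul_apply]

lemma Q1_0a (d : Fin n) : Q1 n κ (none, some d) = 0 := by
  simp [Q1, eb_apply, Finset.sum_apply, Pi.smul_apply]

lemma Q1_a0 (d : Fin n) : Q1 n κ (some d, none) = 0 := by
  simp [Q1, eb_apply, Finset.sum_apply, Pi.smul_apply]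

lemma Q1_ab (a b : Fin n) : Q1 n κ (some a, some b) = cst (κ a b) * dltInv * dltInv := by
  simp [Q1, eb_apply, Finset.sum_apply, Pi.smul_apply, Prod.ext_iff, ite_and]

lemma Q2_00 (c : Fin n) : Q2 n f c (none, none) = 0 := by
  simp [Q2, eb_apply, Finset.sum_apply, Pi.smul_apply]

lemma Q2_0a (c d : Fin n) : Q2 n f c (none, some d) = if d = c then 1 else 0 := by
  simp [Q2, eb_apply, Finset.sum_apply, Pi.smul_apply]

lemma Q2_a0 (c d : Fin n) : Q2 n f c (some d, none) = 0 := by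
  simp [Q2, eb_apply, Finset.sum_apply, Pi.smul_apply]

lemma Q2_ab (c a b : Fin n) :
    Q2 n f c (some a, some b) = cst ((2 : ℂ)⁻¹ * f a b c) * dltInv := by
  simp [Q2, eb_apply, Finset.sum_apply, Pi.smul_apply, Prod.ext_iff, ite_and]

lemma Q3_00 (c : Fin n) : Q3 n f c (none, none) = 0 := by
  simp [Q3, eb_apply, Finset.sum_apply, Pi.smul_apply]

lemma Q3_0a (c d : Fin n) : Q3 n f c (none, some d) = 0 := by
  simp [Q3, eb_apply, Finset.sum_apply, Pi.smul_apply]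

lemma Q3_a0 (c d : Fin n) : Q3 n f c (some d, none) = if d = c then 1 else 0 := by
  simp [Q3, eb_apply, Finset.sum_apply, Pi.smul_apply]

lemma Q3_ab (c a b : Fin n) :
    Q3 n f c (some a, some b) = cst ((2 : ℂ)⁻¹ * f a b c) * dltInv := by
  simp [Q3, eb_apply, Finset.sum_apply, Pi.smul_apply, Prod.ext_iff, ite_and]

end
end AnnAux
section AnnAux2

open MvPolynomial

noncomputable section

variable (n : ℕ) (f : Fin n → Fin n → Fin n → ℂ) (κ : Fin n → Fin n → ℂ)

abbrev Rng : Submodule A2 R2 := LinearMap.range (Algebra.linearMap A2 R2)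

lemma algebraMap_mem_Rng (a : A2) : algebraMap A2 R2 a ∈ Rng := ⟨a, rfl⟩

lemma one_mem_Rng : (1 : R2) ∈ Rng := ⟨1, by simp⟩

lemma ite_mem_Rng (p : Prop) [Decidable p] : (if p then (1:R2) else 0) ∈ Rng := by
  split
  · exact one_mem_Rng
  · exact Submodule.zero_mem _

lemma kmPgen_eq : kmPgen n f κ =
    {eb n (none, none)} ∪ (Set.range fun a => eb n (none, some a)) ∪
      (Set.range fun a => eb n (some a, none)) ∪
      (Set.range fun p : Fin n × Fin n => P4 n f κ p.1 p.2) := by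
  ext m
  simp only [kmPgen, Set.mem_setOf_eq, Set.mem_union, Set.mem_singleton_iff, Set.mem_range,
    Prod.exists, P4]
  tauto

lemma kmQgen_eq : kmQgen n f κ =
    {Q1 n κ} ∪ (Set.range (Q2 n f)) ∪ (Set.range (Q3 n f)) ∪
      (Set.range fun p : Fin n × Fin n => eb n (some p.1, some p.2)) := by
  ext m
  simp only [kmQgen, Set.mem_setOf_eq, Set.mem_union, Set.mem_singleton_iff, Set.mem_range,
    Prod.exists, Q1, Q2, Q3]
  tauto

lemma pair_reg (t : (Option (Fin n) × Option (Fin n)) → R2) (ht : t ∈ kmQgen n f κ)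
    (p : (Option (Fin n) × Option (Fin n)) → R2) (hp : p ∈ kmPgen n f κ) :
    pairMap t p ∈ Rng := by
  rw [kmQgen_eq] at ht
  rw [kmPgen_eq] at hp
  rcases hp with ((rfl | ⟨a, rfl⟩) | ⟨a, rfl⟩) | ⟨⟨a, b⟩, rfl⟩ <;>
    rcases ht with ((rfl | ⟨c, rfl⟩) | ⟨c, rfl⟩) | ⟨⟨a', b'⟩, rfl⟩ <;>
      simp only [pairMap_eb, pairMap_P4, Q1_00, Q1_0a, Q1_a0, Q1_ab, Q2_00, Q2_0a, Q2_a0,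
        Q2_ab, Q3_00, Q3_0a, Q3_a0, Q3_ab, eb_apply]
  all_goals first
    | exact one_mem_Rng
    | exact Submodule.zero_mem _
    | exact ite_mem_Rng _
    | (simp only [mul_zero, mul_one, zero_add, add_zero, mul_ite, Finset.sum_ite_eq',
        Finset.mem_univ, if_true, Finset.sum_const_zero, sub_zero, sub_self,
        Prod.mk.injEq, Option.some.injEq, reduceCtorEq, false_and, and_false, if_false,
        ite_false];
       first
        | exact Submodule.zero_mem _
        | exact ite_mem_Rng _
        | exact one_mem_Rng)

end
end AnnAux2
section AnnAux3

open MvPolynomial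

noncomputable section

variable (n : ℕ) (f : Fin n → Fin n → Fin n → ℂ) (κ : Fin n → Fin n → ℂ)

lemma asmul (a : A2) (r : R2) : a • r = algebraMap A2 R2 a * r := Algebra.smul_def a r

lemma spanQ_le :
    Submodule.span A2 (kmQgen n f κ) ≤ chiralAnn (Submodule.span A2 (kmPgen n f κ)) := by
  rw [Submodule.span_le]
  intro t ht
  simp only [chiralAnn, SetLike.mem_coe, Submodule.mem_iInf, Submodule.mem_comap]
  intro p hp
  rw [pairMap_comm]
  have hle : Submodule.span A2 (kmPgen n f κ) ≤ Submodule.comap (pairMap t) Rng :=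
    Submodule.span_le.mpr fun p hp => pair_reg n f κ t ht p hp
  exact hle hp

set_option maxHeartbeats 1000000 in
lemma ann_le_spanQ :
    chiralAnn (Submodule.span A2 (kmPgen n f κ)) ≤ Submodule.span A2 (kmQgen n f κ) := by
  intro t ht
  simp only [chiralAnn, Submodule.mem_iInf, Submodule.mem_comap] at ht
  have hval : ∀ p ∈ kmPgen n f κ, pairMap t p ∈ Rng := by
    intro p hp
    rw [← pairMap_comm]
    exact ht p (Submodule.subset_span hp)
  rw [kmPgen_eq] at hval
  have h00 : t (none, none) ∈ Rng := by
    have := hval _ (Or.inl (Or.inl (Or.inl rfl)))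
    rwa [pairMap_eb] at this
  have h0 : ∀ c, t (none, some c) ∈ Rng := fun c => by
    have := hval _ (Or.inl (Or.inl (Or.inr ⟨c, rfl⟩)))
    rwa [pairMap_eb] at this
  have h3 : ∀ c, t (some c, none) ∈ Rng := fun c => by
    have := hval _ (Or.inl (Or.inr ⟨c, rfl⟩))
    rwa [pairMap_eb] at this
  have h4 : ∀ a b, (t (some a, some b) -
      (∑ c, (cst ((2 : ℂ)⁻¹ * f a b c) * dltInv) * (t (none, some c) + t (some c, none))) -
      (cst (κ a b) * dltInv * dltInv) * t (none, none)) ∈ Rng := fun a b => by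
    have := hval _ (Or.inr ⟨(a, b), rfl⟩)
    rwa [pairMap_P4] at this
  obtain ⟨g00, hg00⟩ := h00
  choose g0 hg0 using h0
  choose g3 hg3 using h3
  choose g4 hg4 using fun a => h4 a
  simp only [Algebra.linearMap_apply] at hg00 hg0 hg3 hg4
  have sum_sum_ite : ∀ (g : Fin n → Fin n → R2) (a b : Fin n),
      (∑ x, ∑ y, if a = x then if b = y then g x y else 0 else 0) = g a b := by
    intro g a b
    have h1 : ∀ x, (∑ y, if a = x then if b = y then g x y else 0 else 0)
        = if a = x then g x b else 0 := fun x => by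
      split <;> simp [Finset.sum_ite_eq]
    simp [h1, Finset.sum_ite_eq]
  have key : t = g00 • Q1 n κ + (∑ c, g0 c • Q2 n f c) + (∑ c, g3 c • Q3 n f c) +
      ∑ a, ∑ b, g4 a b • eb n (some a, some b) := by
    funext q
    obtain ⟨u, v⟩ := q
    simp only [Pi.add_apply, Finset.sum_apply, Pi.smul_apply]
    match u, v with
    | none, none =>
      simp only [Q1_00, Q2_00, Q3_00, eb_apply, Prod.mk.injEq, reduceCtorEq, false_and,
        if_false, smul_zero, Finset.sum_const_zero, add_zero, asmul, mul_one, mul_zero, Finset.sum_const_zero, add_zero, hg00]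
    | none, some d =>
      simp only [Q1_0a, Q2_0a, Q3_0a, eb_apply, Prod.mk.injEq, reduceCtorEq, false_and,
        and_false, if_false, smul_zero, Finset.sum_const_zero, add_zero, zero_add,
        asmul, mul_ite, mul_one, mul_zero, Finset.sum_ite_eq, Finset.mem_univ,
        if_true, mul_zero, Finset.sum_const_zero, add_zero, zero_add, hg0]
    | some d, none =>
      simp only [Q1_a0, Q2_a0, Q3_a0, eb_apply, Prod.mk.injEq, reduceCtorEq, false_and,
        and_false, if_false, smul_zero, Finset.sum_const_zero, add_zero, zero_add,
        asmul, mul_ite, mul_one, mul_zero, Finset.sum_ite_eq, Finset.mem_univ,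
        if_true, mul_zero, Finset.sum_const_zero, add_zero, zero_add, hg3]
    | some a, some b =>
      simp only [Q1_ab, Q2_ab, Q3_ab, eb_apply, Prod.mk.injEq, Option.some.injEq,
        asmul, mul_ite, mul_one, mul_zero, ite_and, sum_sum_ite]
      rw [hg00, hg4]
      rw [Finset.sum_congr rfl (fun c (_ : c ∈ Finset.univ) => by
        rw [hg0 c] : ∀ c ∈ Finset.univ, algebraMap A2 R2 (g0 c) * (cst ((2:ℂ)⁻¹ * f a b c) * dltInv)
          = t (none, some c) * (cst ((2:ℂ)⁻¹ * f a b c) * dltInv))]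
      rw [Finset.sum_congr rfl (fun c (_ : c ∈ Finset.univ) => by
        rw [hg3 c] : ∀ c ∈ Finset.univ, algebraMap A2 R2 (g3 c) * (cst ((2:ℂ)⁻¹ * f a b c) * dltInv)
          = t (some c, none) * (cst ((2:ℂ)⁻¹ * f a b c) * dltInv))]
      rw [show (∑ c, cst ((2:ℂ)⁻¹ * f a b c) * dltInv * (t (none, some c) + t (some c, none)))
          = (∑ c, t (none, some c) * (cst ((2:ℂ)⁻¹ * f a b c) * dltInv))
            + ∑ c, t (some c, none) * (cst ((2:ℂ)⁻¹ * f a b c) * dltInv) from by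
        rw [← Finset.sum_add_distrib]
        exact Finset.sum_congr rfl fun c _ => by ring]
      ring
  rw [key]
  refine Submodule.add_mem _ (Submodule.add_mem _ (Submodule.add_mem _
    (Submodule.smul_mem _ _ ?_) (Submodule.sum_mem _ fun c _ => Submodule.smul_mem _ _ ?_))
    (Submodule.sum_mem _ fun c _ => Submodule.smul_mem _ _ ?_))
    (Submodule.sum_mem _ fun a _ => Submodule.sum_mem _ fun b _ => Submodule.smul_mem _ _ ?_)
  · exact Submodule.subset_span (by rw [kmQgen_eq]; exact Or.inl (Or.inl (Or.inl rfl)))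
  · exact Submodule.subset_span (by rw [kmQgen_eq]; exact Or.inl (Or.inl (Or.inr ⟨c, rfl⟩)))
  · exact Submodule.subset_span (by rw [kmQgen_eq]; exact Or.inl (Or.inr ⟨c, rfl⟩))
  · exact Submodule.subset_span (by rw [kmQgen_eq]; exact Or.inr ⟨(a, b), rfl⟩)

end
end AnnAux3

/-- For a finite-dimensional Lie algebra `g` with structure
constants `f` and invariant form `κ`, the chiral annihilator of the `ℂ[z₁,z₂]`-span of
the affine Kac–Moody relations `P°` is the `ℂ[z₁,z₂]`-span of the dual relations. -/
theorem annihilator_of_kac_moody_example (n : ℕ)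
    (f : Fin n → Fin n → Fin n → ℂ) (κ : Fin n → Fin n → ℂ) :
    chiralAnn (Submodule.span A2 (kmPgen n f κ)) = Submodule.span A2 (kmQgen n f κ) := by
  exact le_antisymm (ann_le_spanQ n f κ) (spanQ_le n f κ)
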